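/- arXiv:2001.10279 — 2 statements merged into one kernel-verified Lean document; each statement's English description precedes it below -/
import Mathlib

section
/- For every r > 0 and every φ ∈ ℝ, writing y = (r cos φ, r sin φ) ∈ ℝ², one has the change-of-variables identity B₀(y) = ∫_{π+θ̃_c}^{2π−θ̃_c} f(s) · exp( i k₋ r cos(φ − s) ) ds. -/
open Real MeasureTheory intervalIntegral

/-- The critical angle `θ_c`: `arccos (k₋/k₊)` if `k₊ > k₋`, and `0` if `k₊ < k₋`. -/
noncomputable def thetac (kp km : ℝ) : ℝ := if km < kp then Real.arccos (km / kp) else 0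

/-- The angle `θ̃_c`: `arccos (k₊/k₋)` if `k₋ > k₊`, and `0` if `k₋ < k₊`. -/
noncomputable def thetactilde (kp km : ℝ) : ℝ := if kp < km then Real.arccos (kp / km) else 0

/-- The transmitted angle `θᵗ(θ) = 2π - arccos((k₊/k₋) cos θ) ∈ [π, 2π]`. -/
noncomputable def thetat (kp km θ : ℝ) : ℝ := 2 * Real.pi - Real.arccos (kp / km * Real.cos θ)

/-- The transmission coefficient `T(θ) = 2k₊ sin θ / (k₊ sin θ + k₋ sin θᵗ(θ))`. -/
noncomputable def Tcoef (kp km θ : ℝ) : ℝ :=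
  2 * kp * Real.sin θ / (kp * Real.sin θ + km * Real.sin (thetat kp km θ))

/-- `B₀(y) = ∫_{π+θ_c}^{2π-θ_c} T(θ)² exp(i k₋ y · dᵗ(θ)) dθ`, where
`dᵗ(θ) = (cos θᵗ(θ), sin θᵗ(θ))`. -/
noncomputable def B0 (kp km : ℝ) (y : ℝ × ℝ) : ℂ :=
  ∫ θ in (Real.pi + thetac kp km)..(2 * Real.pi - thetac kp km),
    ((Tcoef kp km θ : ℂ)) ^ 2 *
      Complex.exp (Complex.I * km *
        (y.1 * Real.cos (thetat kp km θ) + y.2 * Real.sin (thetat kp km θ)))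

/-- The density `f(s)` arising from the change of variables `θ ↦ θᵗ` in `B₀`. -/
noncomputable def fdens (kp km s : ℝ) : ℝ :=
  -4 * km * Real.sin s * Real.sqrt (kp ^ 2 - km ^ 2 * (Real.cos s) ^ 2) /
    (-Real.sqrt (kp ^ 2 - km ^ 2 * (Real.cos s) ^ 2) + km * Real.sin s) ^ 2

/-! Substitute `s = θᵗ(θ)`. Snell's law `k₋ cos s = k₊ cos θ` gives
`√(k₊² - k₋² cos² s) = -k₊ sin θ` and `k₋ sin s ds = k₊ sin θ dθ`, after which `T(θ)² dθ = f(s) ds`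
is an algebraic identity. If `k₊ < k₋`, `θ ↦ θᵗ(θ)` maps `[π, 2π]` onto `[π + θ̃_c, 2π - θ̃_c]`.
If `k₊ > k₋`, its inverse is the transmitted-angle map with `k₊` and `k₋` exchanged, which maps
`[π, 2π]` onto `[π + θ_c, 2π - θ_c]`. -/

open Set

lemma sin_nonpos_of_mem_Icc_pi_two_pi {x : ℝ} (hx : x ∈ Icc π (2 * π)) : sin x ≤ 0 := by
  rw [← sin_sub_two_pi]
  exact sin_nonpos_of_nonpos_of_neg_pi_le (by linarith [hx.2]) (by linarith [hx.1])

lemma sin_neg_of_mem_Ioo_pi_two_pi {x : ℝ} (hx : x ∈ Ioo π (2 * π)) : sin x < 0 := by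
  rw [← sin_sub_two_pi]
  exact sin_neg_of_neg_of_neg_pi_lt (by linarith [hx.2]) (by linarith [hx.1])

lemma Icc_arccos_subset_Ioo {c : ℝ} (hc : c < 1) :
    Icc (π + arccos c) (2 * π - arccos c) ⊆ Ioo π (2 * π) := by
  have := arccos_pos.2 hc
  exact fun x hx => ⟨by linarith [hx.1], by linarith [hx.2]⟩

lemma sqrt_sub_sq_mul_cos_sq_of_snell {kp km θ s : ℝ} (hkp : 0 ≤ kp)
    (hsnell : km * cos s = kp * cos θ) (hθ : sin θ ≤ 0) :
    √(kp ^ 2 - km ^ 2 * cos s ^ 2) = -(kp * sin θ) := by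
  rw [← sqrt_sq (by nlinarith : 0 ≤ -(kp * sin θ))]
  congr 1
  linear_combination (-(kp ^ 2)) * sin_sq_add_cos_sq θ - (km * cos s + kp * cos θ) * hsnell

lemma Tcoef_sq_mul_eq_fdens_mul {kp km θ s : ℝ} (hkp : 0 ≤ kp)
    (hsnell : km * cos s = kp * cos θ) (hθ : sin θ ≤ 0) (hs : sin (thetat kp km θ) = sin s) :
    Tcoef kp km θ ^ 2 * (km * sin s) = fdens kp km s * (kp * sin θ) := by
  rw [Tcoef, fdens, sqrt_sub_sq_mul_cos_sq_of_snell hkp hsnell hθ, hs, neg_neg, div_pow]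
  ring

lemma continuousOn_fdens {kp km : ℝ} (hkm : 0 < km) :
    ContinuousOn (fdens kp km) (Ioo π (2 * π)) := by
  refine ContinuousOn.div (by fun_prop) (by fun_prop) fun s hs => ?_
  have := sin_neg_of_mem_Ioo_pi_two_pi hs
  have := sqrt_nonneg (kp ^ 2 - km ^ 2 * cos s ^ 2)
  exact pow_ne_zero 2 (by nlinarith)

section thetat

variable {a b : ℝ}

@[fun_prop]
lemma continuous_thetat : Continuous (thetat a b) := by
  unfold thetat
  fun_prop

lemma sin_thetat (x : ℝ) : sin (thetat a b x) = -√(1 - (a / b * cos x) ^ 2) := by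
  simp [thetat, sin_sub, sin_arccos]

lemma sin_thetat_nonpos (x : ℝ) : sin (thetat a b x) ≤ 0 := by
  rw [sin_thetat]
  exact neg_nonpos.2 (sqrt_nonneg _)

lemma thetat_pi : thetat a b π = π + arccos (a / b) := by
  rw [thetat, cos_pi, mul_neg_one, arccos_neg]
  ring

lemma thetat_two_pi : thetat a b (2 * π) = 2 * π - arccos (a / b) := by
  rw [thetat, cos_two_pi, mul_one]

lemma thetat_mem_Icc (ha : 0 ≤ a) (hb : 0 ≤ b) (x : ℝ) :
    thetat a b x ∈ Icc (π + arccos (a / b)) (2 * π - arccos (a / b)) := by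
  have hc : 0 ≤ a / b := div_nonneg ha hb
  have h₁ : arccos (a / b) ≤ arccos (a / b * cos x) :=
    arccos_le_arccos (by nlinarith [cos_le_one x])
  have h₂ : arccos (a / b * cos x) ≤ arccos (-(a / b)) :=
    arccos_le_arccos (by nlinarith [neg_one_le_cos x])
  rw [arccos_neg] at h₂
  constructor <;> unfold thetat <;> linarith

variable (ha : 0 < a) (hab : a < b)
include ha hab

lemma abs_div_mul_cos_lt_one (x : ℝ) : |a / b * cos x| < 1 := by
  have hb : 0 < b := ha.trans hab
  rw [abs_mul, abs_of_pos (div_pos ha hb)]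
  calc a / b * |cos x| ≤ a / b := mul_le_of_le_one_right (div_pos ha hb).le (abs_cos_le_one x)
    _ < 1 := (div_lt_one hb).2 hab

lemma mul_cos_thetat (x : ℝ) : b * cos (thetat a b x) = a * cos x := by
  obtain ⟨h₁, h₂⟩ := abs_lt.1 (abs_div_mul_cos_lt_one ha hab x)
  rw [thetat, cos_sub, cos_two_pi, sin_two_pi, cos_arccos h₁.le h₂.le]
  field_simp [(ha.trans hab).ne']
  ring

lemma sin_thetat_neg (x : ℝ) : sin (thetat a b x) < 0 := by
  rw [sin_thetat, neg_lt_zero, sqrt_pos, sub_pos, sq_lt_one_iff_abs_lt_one]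
  exact abs_div_mul_cos_lt_one ha hab x

lemma hasDerivAt_thetat (x : ℝ) :
    HasDerivAt (thetat a b) (a * sin x / (b * sin (thetat a b x))) x := by
  obtain ⟨h₁, h₂⟩ := abs_lt.1 (abs_div_mul_cos_lt_one ha hab x)
  have h := ((hasDerivAt_arccos h₁.ne' h₂.ne).comp x
    ((hasDerivAt_cos x).const_mul (a / b))).const_sub (2 * π)
  have hsqrt : √(1 - (a / b * cos x) ^ 2) ≠ 0 := by
    have := sin_thetat_neg ha hab x
    rw [sin_thetat] at this
    linarith
  refine h.congr_deriv ?_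
  rw [sin_thetat]
  field_simp [(ha.trans hab).ne', hsqrt]

lemma thetat_thetat {x : ℝ} (hx : x ∈ Icc π (2 * π)) : thetat b a (thetat a b x) = x := by
  have hcos : b / a * cos (thetat a b x) = cos (2 * π - x) := by
    rw [cos_two_pi_sub, div_mul_eq_mul_div, mul_cos_thetat ha hab]
    field_simp [ha.ne']
  rw [thetat, hcos, arccos_cos (by linarith [hx.2]) (by linarith [hx.1])]
  ring

theorem integral_comp_thetat {E : Type*} [NormedAddCommGroup E] [NormedSpace ℝ E] {F : ℝ → E}
    (hF : ContinuousOn F (Icc (π + arccos (a / b)) (2 * π - arccos (a / b)))) :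
    ∫ x in π..2 * π, (a * sin x / (b * sin (thetat a b x))) • F (thetat a b x) =
      ∫ s in π + arccos (a / b)..2 * π - arccos (a / b), F s := by
  rw [← thetat_pi, ← thetat_two_pi]
  refine integral_deriv_smul_comp' (fun x _ => hasDerivAt_thetat ha hab x) ?_ ?_
  · exact ContinuousOn.div (by fun_prop) (by fun_prop)
      fun x _ => mul_ne_zero (ha.trans hab).ne' (sin_thetat_neg ha hab x).ne
  · exact hF.mono (image_subset_iff.2 fun x _ => thetat_mem_Icc ha.le (ha.trans hab).le x)

end thetat

lemma continuousOn_Tcoef {kp km : ℝ} (hkp : 0 < kp) (hkm : 0 ≤ km) :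
    ContinuousOn (Tcoef kp km) (Ioo π (2 * π)) := by
  refine ContinuousOn.div (by fun_prop) (by fun_prop) fun θ hθ => ?_
  have := sin_neg_of_mem_Ioo_pi_two_pi hθ
  nlinarith [sin_thetat_nonpos (a := kp) (b := km) θ]

lemma B0_polar (kp km r φ : ℝ) :
    B0 kp km (r * cos φ, r * sin φ) =
      ∫ θ in π + thetac kp km..2 * π - thetac kp km,
        (Tcoef kp km θ : ℂ) ^ 2 * Complex.exp (Complex.I * km * r * cos (φ - thetat kp km θ)) := by
  refine integral_congr fun θ _ => ?_
  simp only [cos_sub]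
  push_cast
  ring_nf

lemma Tcoef_sq_eq_deriv_mul_fdens {kp km θ : ℝ} (hkp : 0 < kp) (hlt : kp < km)
    (hθ : θ ∈ Icc π (2 * π)) :
    Tcoef kp km θ ^ 2 =
      kp * sin θ / (km * sin (thetat kp km θ)) * fdens kp km (thetat kp km θ) := by
  have hne : km * sin (thetat kp km θ) ≠ 0 :=
    mul_ne_zero (hkp.trans hlt).ne' (sin_thetat_neg hkp hlt θ).ne
  rw [div_mul_eq_mul_div, eq_div_iff hne, Tcoef_sq_mul_eq_fdens_mul hkp.le
    (mul_cos_thetat hkp hlt θ) (sin_nonpos_of_mem_Icc_pi_two_pi hθ) rfl]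
  ring

lemma fdens_eq_deriv_mul_Tcoef_sq {kp km s : ℝ} (hkm : 0 < km) (hlt : km < kp)
    (hs : s ∈ Icc π (2 * π)) :
    fdens kp km s =
      km * sin s / (kp * sin (thetat km kp s)) * Tcoef kp km (thetat km kp s) ^ 2 := by
  have hne : kp * sin (thetat km kp s) ≠ 0 :=
    mul_ne_zero (hkm.trans hlt).ne' (sin_thetat_neg hkm hlt s).ne
  have h := Tcoef_sq_mul_eq_fdens_mul (hkm.trans hlt).le (mul_cos_thetat hkm hlt s).symm
    (sin_thetat_nonpos s) (congrArg sin (thetat_thetat hkm hlt hs))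
  rw [div_mul_eq_mul_div, eq_div_iff hne]
  linear_combination -h

theorem B0_change_of_variables_general (kp km : ℝ) (hkp : 0 < kp) (hkm : 0 < km) (hne : kp ≠ km)
    (r : ℝ) (φ : ℝ) :
    B0 kp km (r * Real.cos φ, r * Real.sin φ) =
      ∫ s in (Real.pi + thetactilde kp km)..(2 * Real.pi - thetactilde kp km),
        ((fdens kp km s : ℂ)) * Complex.exp (Complex.I * km * r * Real.cos (φ - s)) := by
  have hpi : π ≤ 2 * π := by linarith [pi_pos]
  rw [B0_polar]
  rcases hne.lt_or_gt with hlt | hlt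
  · rw [thetac, thetactilde, if_neg (not_lt.2 hlt.le), if_pos hlt, add_zero, sub_zero,
      ← integral_comp_thetat hkp hlt]
    · refine integral_congr fun θ hθ => ?_
      rw [uIcc_of_le hpi] at hθ
      simp only [Complex.real_smul]
      rw [← Complex.ofReal_pow, Tcoef_sq_eq_deriv_mul_fdens hkp hlt hθ]
      push_cast
      ring
    · exact (Complex.continuous_ofReal.comp_continuousOn ((continuousOn_fdens hkm).mono
        (Icc_arccos_subset_Ioo ((div_lt_one hkm).2 hlt)))).mul (by fun_prop)
  · rw [thetac, thetactilde, if_pos hlt, if_neg (not_lt.2 hlt.le), add_zero, sub_zero,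
      ← integral_comp_thetat hkm hlt]
    · refine integral_congr fun s hs => ?_
      rw [uIcc_of_le hpi] at hs
      simp only [Complex.real_smul]
      rw [thetat_thetat hkm hlt hs, fdens_eq_deriv_mul_Tcoef_sq hkm hlt hs]
      push_cast
      ring
    · exact ((Complex.continuous_ofReal.comp_continuousOn
        ((continuousOn_Tcoef hkp hkm.le).mono (Icc_arccos_subset_Ioo ((div_lt_one hkp).2 hlt)))).pow
          2).mul (by fun_prop)

/-- The change-of-variables identity (formula (2.10) in the paper): writing
`y = (r cos φ, r sin φ)` with `r > 0`, one has
`B₀(y) = ∫_{π+θ̃_c}^{2π-θ̃_c} f(s) exp(i k₋ r cos(φ - s)) ds`. -/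
theorem B0_change_of_variables (kp km : ℝ) (hkp : 0 < kp) (hkm : 0 < km) (hne : kp ≠ km)
    (r : ℝ) (hr : 0 < r) (φ : ℝ) :
    B0 kp km (r * Real.cos φ, r * Real.sin φ) =
      ∫ s in (Real.pi + thetactilde kp km)..(2 * Real.pi - thetactilde kp km),
        ((fdens kp km s : ℂ)) * Complex.exp (Complex.I * km * r * Real.cos (φ - s)) :=
  B0_change_of_variables_general kp km hkp hkm hne r φ
end

section
/- Let a < b be real numbers with b − a ≤ 2π and let g : [a,b] → ℂ be continuously differentiable. Then there exists a constant C > 0 (depending only on g, a and b) such that for every φ ∈ ℝ and every λ ≥ 1, one has |∫_a^b g(s) · exp( i λ cos(φ − s) ) ds| ≤ C λ^{−1/2}. -/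
/-!
After the substitution `s ↦ φ - s` the phase is `cos u` on an interval of length at most `2π`,
which meets at most five quarter periods `[kπ/2, (k+1)π/2]`. On each quarter `cos'' = -cos`
has constant sign. Put `δ = λ^{-1/2}`: the `δ`-neighbourhoods of the ends of a quarter contribute
`O(δ)` trivially, and on the rest `|cos'| = |sin| ≥ 2δ/π`, so van der Corput's first-derivative
test (integration by parts against `e^{iλψ}`, with the amplitude carried along) gives
`O(1/(λδ)) = O(δ)`.
-/

open Real MeasureTheory intervalIntegral

open Complex (I)
open scoped Complex

theorem norm_cexp_I_mul_ofReal_mul (lam t : ℝ) : ‖cexp (I * lam * t)‖ = 1 := by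
  rw [Complex.norm_exp]
  simp

theorem norm_quotient_deriv_le {z z' : ℂ} {p p' m A B : ℝ} (hm : 0 < m) (hp : m ≤ |p|)
    (hz : ‖z‖ ≤ A) (hz' : ‖z'‖ ≤ B) :
    ‖(z' * p - z * p') / (p : ℂ) ^ 2‖ ≤ B / m + A * (|p'| / p ^ 2) := by
  have hp0 : (p : ℂ) ≠ 0 := Complex.ofReal_ne_zero.mpr (abs_pos.mp (hm.trans_le hp))
  have hsplit : (z' * p - z * p') / (p : ℂ) ^ 2 = z' / p - z * (p' / (p : ℂ) ^ 2) := by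
    field_simp
  rw [hsplit]
  refine (norm_sub_le _ _).trans (add_le_add ?_ ?_)
  · rw [norm_div, Complex.norm_real, Real.norm_eq_abs]
    exact div_le_div₀ ((norm_nonneg _).trans hz') hz' hm hp
  · rw [norm_mul, norm_div, norm_pow, Complex.norm_real, Complex.norm_real, Real.norm_eq_abs,
      Real.norm_eq_abs, sq_abs]
    gcongr

section FirstDerivativeTest

variable {ψ ψ' ψ'' : ℝ → ℝ} {G G' : ℝ → ℂ} {x y lam m A B : ℝ}

/-- `|ψ''| / ψ'^2 = |(1/ψ')'|` and `1/ψ'` is monotone, so the integral telescopes. -/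
theorem integral_abs_deriv_div_sq_le (hxy : x ≤ y) (hm : 0 < m)
    (hψ' : ∀ u ∈ Set.Icc x y, HasDerivAt ψ' (ψ'' u) u)
    (hψ'' : ContinuousOn ψ'' (Set.Icc x y))
    (hsign : (∀ u ∈ Set.Icc x y, 0 ≤ ψ'' u) ∨ (∀ u ∈ Set.Icc x y, ψ'' u ≤ 0))
    (hmψ' : ∀ u ∈ Set.Icc x y, m ≤ |ψ' u|) :
    ∫ u in x..y, |ψ'' u| / ψ' u ^ 2 ≤ 2 / m := by
  have hIcc : Set.uIcc x y = Set.Icc x y := Set.uIcc_of_le hxy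
  have hne : ∀ u ∈ Set.Icc x y, ψ' u ≠ 0 := fun u hu =>
    abs_pos.mp (hm.trans_le (hmψ' u hu))
  have hψ'c : ContinuousOn ψ' (Set.Icc x y) := fun u hu =>
    (hψ' u hu).continuousAt.continuousWithinAt
  have hftc : ∫ u in x..y, -(ψ'' u / ψ' u ^ 2) = (ψ' y)⁻¹ - (ψ' x)⁻¹ := by
    have hcont : ContinuousOn (fun u => -(ψ'' u / ψ' u ^ 2)) (Set.uIcc x y) := by
      rw [hIcc]
      exact (hψ''.div (hψ'c.pow 2) fun u hu => pow_ne_zero 2 (hne u hu)).neg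
    refine integral_eq_sub_of_hasDerivAt (f := fun u => (ψ' u)⁻¹) (fun u hu => ?_)
      hcont.intervalIntegrable
    have := (hψ' u (hIcc ▸ hu)).inv (hne u (hIcc ▸ hu))
    rwa [neg_div] at this
  have hinv : ∀ u ∈ Set.Icc x y, |(ψ' u)⁻¹| ≤ 1 / m := fun u hu => by
    rw [abs_inv, one_div]
    exact inv_anti₀ hm (hmψ' u hu)
  have hbound : |(ψ' y)⁻¹ - (ψ' x)⁻¹| ≤ 2 / m := by
    have := abs_sub (ψ' y)⁻¹ (ψ' x)⁻¹
    rw [show 2 / m = 1 / m + 1 / m by ring]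
    linarith [hinv y ⟨hxy, le_rfl⟩, hinv x ⟨le_rfl, hxy⟩]
  rcases hsign with hpos | hneg
  · have : ∫ u in x..y, |ψ'' u| / ψ' u ^ 2 = -((ψ' y)⁻¹ - (ψ' x)⁻¹) := by
      rw [← hftc, ← intervalIntegral.integral_neg]
      refine integral_congr fun u hu => ?_
      simp [abs_of_nonneg (hpos u (hIcc ▸ hu))]
    linarith [neg_le_abs ((ψ' y)⁻¹ - (ψ' x)⁻¹)]
  · have : ∫ u in x..y, |ψ'' u| / ψ' u ^ 2 = (ψ' y)⁻¹ - (ψ' x)⁻¹ := by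
      rw [← hftc]
      refine integral_congr fun u hu => ?_
      simp [abs_of_nonpos (hneg u (hIcc ▸ hu)), neg_div]
    linarith [le_abs_self ((ψ' y)⁻¹ - (ψ' x)⁻¹)]

theorem integral_mul_cexp_phase_eq (hxy : x ≤ y)
    (hψ : ∀ u ∈ Set.Icc x y, HasDerivAt ψ (ψ' u) u)
    (hψ' : ∀ u ∈ Set.Icc x y, HasDerivAt ψ' (ψ'' u) u)
    (hψ'' : ContinuousOn ψ'' (Set.Icc x y)) (hne : ∀ u ∈ Set.Icc x y, ψ' u ≠ 0)
    (hG : ∀ u ∈ Set.Icc x y, HasDerivAt G (G' u) u) (hG' : ContinuousOn G' (Set.Icc x y)) :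
    I * lam * ∫ u in x..y, G u * cexp (I * lam * ψ u)
      = G y / ψ' y * cexp (I * lam * ψ y) - G x / ψ' x * cexp (I * lam * ψ x)
        - ∫ u in x..y, (G' u * ψ' u - G u * ψ'' u) / (ψ' u : ℂ) ^ 2
            * cexp (I * lam * ψ u) := by
  rw [← Set.uIcc_of_le hxy] at hψ hψ' hψ'' hne hG hG'
  have hne' : ∀ u ∈ Set.uIcc x y, (ψ' u : ℂ) ≠ 0 := fun u hu =>
    Complex.ofReal_ne_zero.mpr (hne u hu)
  have hGc : ContinuousOn G (Set.uIcc x y) := fun u hu =>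
    (hG u hu).continuousAt.continuousWithinAt
  have hψc : ContinuousOn (fun u => (ψ u : ℂ)) (Set.uIcc x y) := fun u hu =>
    (hψ u hu).ofReal_comp.continuousAt.continuousWithinAt
  have hψ'c : ContinuousOn (fun u => (ψ' u : ℂ)) (Set.uIcc x y) := fun u hu =>
    (hψ' u hu).ofReal_comp.continuousAt.continuousWithinAt
  have hquot : ContinuousOn (fun u => (G' u * ψ' u - G u * ψ'' u) / (ψ' u : ℂ) ^ 2)
      (Set.uIcc x y) :=
    ((hG'.mul hψ'c).sub (hGc.mul (Complex.continuous_ofReal.comp_continuousOn hψ''))).div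
      (hψ'c.pow 2) fun u hu => pow_ne_zero 2 (hne' u hu)
  have hphase : ContinuousOn (fun u => cexp (I * lam * ψ u) * (I * lam * ψ' u))
      (Set.uIcc x y) :=
    (continuousOn_const.mul hψc).cexp.mul (continuousOn_const.mul hψ'c)
  rw [← intervalIntegral.integral_const_mul, ← integral_mul_deriv_eq_deriv_mul
    (u := fun u => G u / (ψ' u : ℂ))
    (fun u hu => (hG u hu).div (hψ' u hu).ofReal_comp (hne' u hu))
    (fun u hu => ((hψ u hu).ofReal_comp.const_mul (I * lam)).cexp)
    hquot.intervalIntegrable hphase.intervalIntegrable]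
  refine integral_congr fun u hu => ?_
  field_simp [hne' u hu]

theorem norm_integral_mul_cexp_phase_le (hxy : x ≤ y) (hlam : 0 < lam) (hm : 0 < m)
    (hψ : ∀ u ∈ Set.Icc x y, HasDerivAt ψ (ψ' u) u)
    (hψ' : ∀ u ∈ Set.Icc x y, HasDerivAt ψ' (ψ'' u) u)
    (hψ'' : ContinuousOn ψ'' (Set.Icc x y))
    (hsign : (∀ u ∈ Set.Icc x y, 0 ≤ ψ'' u) ∨ (∀ u ∈ Set.Icc x y, ψ'' u ≤ 0))
    (hmψ' : ∀ u ∈ Set.Icc x y, m ≤ |ψ' u|)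
    (hG : ∀ u ∈ Set.Icc x y, HasDerivAt G (G' u) u) (hG' : ContinuousOn G' (Set.Icc x y))
    (hA : ∀ u ∈ Set.Icc x y, ‖G u‖ ≤ A) (hB : ∀ u ∈ Set.Icc x y, ‖G' u‖ ≤ B) :
    ‖∫ u in x..y, G u * cexp (I * lam * ψ u)‖ ≤ (4 * A + B * (y - x)) / (lam * m) := by
  have hne : ∀ u ∈ Set.Icc x y, ψ' u ≠ 0 := fun u hu => abs_pos.mp (hm.trans_le (hmψ' u hu))
  have hbdry : ∀ u ∈ Set.Icc x y, ‖G u / ψ' u * cexp (I * lam * ψ u)‖ ≤ A / m :=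
    fun u hu => by
    rw [norm_mul, norm_cexp_I_mul_ofReal_mul, mul_one, norm_div, Complex.norm_real,
      Real.norm_eq_abs]
    exact div_le_div₀ ((norm_nonneg _).trans (hA u hu)) (hA u hu) hm (hmψ' u hu)
  have hcurv : IntervalIntegrable (fun u => |ψ'' u| / ψ' u ^ 2) volume x y := by
    refine ContinuousOn.intervalIntegrable ?_
    rw [Set.uIcc_of_le hxy]
    have hψ'c : ContinuousOn ψ' (Set.Icc x y) := fun u hu =>
      (hψ' u hu).continuousAt.continuousWithinAt
    exact hψ''.abs.div (hψ'c.pow 2) fun u hu => pow_ne_zero 2 (hne u hu)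
  have hrest : ‖∫ u in x..y, (G' u * ψ' u - G u * ψ'' u) / (ψ' u : ℂ) ^ 2
      * cexp (I * lam * ψ u)‖ ≤ (y - x) * (B / m) + A * (2 / m) :=
    calc _ ≤ ∫ u in x..y, (B / m + A * (|ψ'' u| / ψ' u ^ 2)) := by
          refine norm_integral_le_of_norm_le hxy (ae_of_all _ fun u hu => ?_)
            (intervalIntegrable_const.add (hcurv.const_mul A))
          have hu' := Set.Ioc_subset_Icc_self hu
          rw [norm_mul, norm_cexp_I_mul_ofReal_mul, mul_one]
          exact norm_quotient_deriv_le hm (hmψ' u hu') (hA u hu') (hB u hu')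
      _ = (y - x) * (B / m) + A * ∫ u in x..y, |ψ'' u| / ψ' u ^ 2 := by
          rw [intervalIntegral.integral_add intervalIntegrable_const (hcurv.const_mul A),
            intervalIntegral.integral_const, intervalIntegral.integral_const_mul, smul_eq_mul]
      _ ≤ (y - x) * (B / m) + A * (2 / m) := by
          gcongr
          · exact (norm_nonneg _).trans (hA x ⟨le_rfl, hxy⟩)
          · exact integral_abs_deriv_div_sq_le hxy hm hψ' hψ'' hsign hmψ'
  have hnorm :
      lam * ‖∫ u in x..y, G u * cexp (I * lam * ψ u)‖ ≤ (4 * A + B * (y - x)) / m :=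
    calc _ = ‖I * lam * ∫ u in x..y, G u * cexp (I * lam * ψ u)‖ := by
          rw [norm_mul, norm_mul, Complex.norm_I, one_mul, Complex.norm_real, Real.norm_eq_abs,
            abs_of_pos hlam]
      _ ≤ A / m + A / m + ((y - x) * (B / m) + A * (2 / m)) := by
          rw [integral_mul_cexp_phase_eq hxy hψ hψ' hψ'' hne hG hG']
          exact (norm_sub_le _ _).trans (add_le_add ((norm_sub_le _ _).trans
            (add_le_add (hbdry y ⟨hxy, le_rfl⟩) (hbdry x ⟨le_rfl, hxy⟩))) hrest)
      _ = (4 * A + B * (y - x)) / m := by ring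
  rwa [mul_comm lam m, ← div_div, le_div_iff₀ hlam, mul_comm]

end FirstDerivativeTest

section Splitting

variable {E : Type*} [NormedAddCommGroup E] [NormedSpace ℝ E] {f : ℝ → E}

theorem norm_integral_le_of_norm_le_const_of_le {x y A : ℝ} (hxy : x ≤ y)
    (hA : ∀ u ∈ Set.Icc x y, ‖f u‖ ≤ A) : ‖∫ u in x..y, f u‖ ≤ A * (y - x) := by
  simpa [abs_of_nonneg (sub_nonneg.mpr hxy)] using
    norm_integral_le_of_norm_le_const fun u hu =>
      hA u (Set.Ioc_subset_Icc_self (Set.uIoc_of_le hxy ▸ hu))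

theorem norm_integral_le_of_norm_integral_le_away_from_ends {x y p q δ A M : ℝ}
    (hxy : x ≤ y) (hsub : Set.Icc x y ⊆ Set.Icc p q) (hδ : 0 ≤ δ) (hM : 0 ≤ M)
    (hf : IntervalIntegrable f volume x y) (hA : ∀ u ∈ Set.Icc x y, ‖f u‖ ≤ A)
    (hinner : ∀ x' y', x' ≤ y' →
      Set.Icc x' y' ⊆ Set.Icc x y ∩ Set.Icc (p + δ) (q - δ) →
        ‖∫ u in x'..y', f u‖ ≤ M) :
    ‖∫ u in x..y, f u‖ ≤ 2 * A * δ + M := by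
  obtain ⟨hpx, hyq⟩ : p ≤ x ∧ y ≤ q :=
    ⟨(hsub ⟨le_rfl, hxy⟩).1, (hsub ⟨hxy, le_rfl⟩).2⟩
  have hA0 : 0 ≤ A := (norm_nonneg _).trans (hA x ⟨le_rfl, hxy⟩)
  set x' := max x (p + δ)
  set y' := min y (q - δ)
  by_cases hx'y' : x' ≤ y'
  · have hxx' : x ≤ x' := le_max_left _ _
    have hy'y : y' ≤ y := min_le_left _ _
    have hint : ∀ s t, x ≤ s → s ≤ t → t ≤ y → IntervalIntegrable f volume s t :=
      fun s t hs hst ht => hf.mono_set (by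
        rw [Set.uIcc_of_le hxy, Set.uIcc_of_le hst]; exact Set.Icc_subset_Icc hs ht)
    have hsub' : ∀ s t, x ≤ s → t ≤ y → Set.Icc s t ⊆ Set.Icc x y := fun s t hs ht =>
      Set.Icc_subset_Icc hs ht
    have hx'y : x' ≤ y := hx'y'.trans hy'y
    rw [← integral_add_adjacent_intervals (hint x x' le_rfl hxx' hx'y)
        (hint x' y hxx' hx'y le_rfl),
      ← integral_add_adjacent_intervals (hint x' y' hxx' hx'y' hy'y)
        (hint y' y (hxx'.trans hx'y') hy'y le_rfl)]
    have hleft := norm_integral_le_of_norm_le_const_of_le hxx' fun u hu =>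
      hA u (hsub' x x' le_rfl hx'y hu)
    have hright := norm_integral_le_of_norm_le_const_of_le hy'y fun u hu =>
      hA u (hsub' y' y (hxx'.trans hx'y') le_rfl hu)
    have hmid := hinner x' y' hx'y' (Set.subset_inter (hsub' x' y' hxx' hy'y)
      (Set.Icc_subset_Icc (le_max_right _ _) (min_le_right _ _)))
    have hx'x : x' ≤ x + δ := max_le (by linarith) (by linarith)
    have hyy' : y - δ ≤ y' := le_min (by linarith) (by linarith)
    calc ‖(∫ u in x..x', f u) + ((∫ u in x'..y', f u) + ∫ u in y'..y, f u)‖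
        ≤ A * (x' - x) + (M + A * (y - y')) :=
          (norm_add_le _ _).trans
            (add_le_add hleft ((norm_add_le _ _).trans (add_le_add hmid hright)))
      _ ≤ 2 * A * δ + M := by nlinarith
  · have hshort : y - x ≤ 2 * δ := by
      simp only [x', y', max_le_iff, le_min_iff, not_and_or, not_le] at hx'y'
      rcases hx'y' with (h | h) | (h | h) <;> linarith
    calc ‖∫ u in x..y, f u‖ ≤ A * (y - x) := norm_integral_le_of_norm_le_const_of_le hxy hA
      _ ≤ 2 * A * δ + M := by nlinarith

theorem Icc_max_min_subset_of_lt {α : Type*} [LinearOrder α] {c d q q' : α} (hcd : c ≤ d)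
    (hlt : max c (min d q) < max c (min d q')) :
    Set.Icc (max c (min d q)) (max c (min d q')) ⊆ Set.Icc q q' := by
  refine Set.Icc_subset_Icc ?_ ?_
  · rcases le_or_gt q d with hq | hq
    · exact (min_eq_right hq).symm.le.trans (le_max_right _ _)
    · rw [min_eq_left hq.le, max_eq_right hcd] at hlt
      exact absurd hlt (max_le hcd (min_le_left _ _)).not_gt
  · rcases le_or_gt c q' with hq | hq
    · exact max_le hq (min_le_right _ _)
    · rw [max_eq_left ((min_le_right _ _).trans hq.le)] at hlt
      exact absurd hlt (le_max_left _ _).not_gt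

theorem norm_integral_le_of_norm_integral_le_on_cells {c d h M : ℝ} {N : ℕ} (hcd : c ≤ d)
    (hh : 0 < h) (hlen : d - c ≤ N * h) (hf : IntervalIntegrable f volume c d)
    (hcell : ∀ (k : ℤ) (x y : ℝ), x ≤ y →
      Set.Icc x y ⊆ Set.Icc c d ∩ Set.Icc (k * h) ((k + 1) * h) →
        ‖∫ u in x..y, f u‖ ≤ M) :
    ‖∫ u in c..d, f u‖ ≤ (N + 1) * M := by
  set j : ℤ := ⌊c / h⌋
  have hjc : j * h ≤ c := (le_div_iff₀ hh).mp (Int.floor_le _)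
  have hcj : c < (j + 1) * h := (div_lt_iff₀ hh).mp (Int.lt_floor_add_one _)
  have hM : 0 ≤ M := by
    simpa using hcell j c c le_rfl (by simp [Set.Icc_self, hcd, hjc, hcj.le])
  set t : ℕ → ℝ := fun i => max c (min d ((j + i) * h))
  have ht0 : t 0 = c := by simp [t, hjc]
  have htN : t (N + 1) = d := by
    have : d ≤ (j + (N + 1 : ℕ)) * h := by push_cast; nlinarith
    simp only [t]
    rw [min_eq_left this, max_eq_right hcd]
  have hct : ∀ i, c ≤ t i := fun i => le_max_left _ _
  have htd : ∀ i, t i ≤ d := fun i => max_le hcd (min_le_left _ _)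
  have hmono : ∀ i, t i ≤ t (i + 1) := fun i => by
    refine max_le_max le_rfl (min_le_min le_rfl (mul_le_mul_of_nonneg_right ?_ hh.le))
    push_cast; linarith
  have hpiece : ∀ i, ‖∫ u in t i..t (i + 1), f u‖ ≤ M := fun i => by
    rcases (hmono i).eq_or_lt with heq | hlt
    · simpa [heq] using hM
    have hsub := Icc_max_min_subset_of_lt hcd hlt
    refine hcell (j + i) (t i) (t (i + 1)) hlt.le
      (Set.subset_inter (Set.Icc_subset_Icc (hct i) (htd _)) (hsub.trans_eq ?_))
    push_cast
    ring_nf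
  rw [← ht0, ← htN, ← sum_integral_adjacent_intervals fun i _ => hf.mono_set (by
    rw [Set.uIcc_of_le hcd, Set.uIcc_of_le (hmono i)]; exact Set.Icc_subset_Icc (hct i) (htd _))]
  calc ‖∑ i ∈ Finset.range (N + 1), ∫ u in t i..t (i + 1), f u‖
      ≤ ∑ i ∈ Finset.range (N + 1), ‖∫ u in t i..t (i + 1), f u‖ := norm_sum_le _ _
    _ ≤ ∑ i ∈ Finset.range (N + 1), M := Finset.sum_le_sum fun i _ => hpiece i
    _ = (N + 1) * M := by simp

end Splitting

theorem two_div_pi_mul_le_abs_sin {n : ℤ} {δ u : ℝ} (hδ : 0 ≤ δ)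
    (hu : u ∈ Set.Icc (n * π + δ) ((n + 1) * π - δ)) : 2 / π * δ ≤ |sin u| := by
  have hshift : |sin u| = sin (u - n * π) := by
    have hv : 0 ≤ sin (u - n * π) :=
      sin_nonneg_of_nonneg_of_le_pi (by linarith [hu.1]) (by linarith [hu.2])
    rw [← abs_of_nonneg hv, sin_sub_int_mul_pi, abs_mul, abs_neg_one_zpow, one_mul]
  rw [hshift]
  rcases le_or_gt (u - n * π) (π / 2) with hv | hv
  · calc 2 / π * δ ≤ 2 / π * (u - n * π) := by gcongr; linarith [hu.1]
      _ ≤ sin (u - n * π) := mul_le_sin (by linarith [hu.1]) hv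
  · calc 2 / π * δ ≤ 2 / π * (π - (u - n * π)) := by gcongr; linarith [hu.2]
      _ ≤ sin (π - (u - n * π)) := mul_le_sin (by linarith [hu.2]) (by linarith)
      _ = sin (u - n * π) := sin_pi_sub _

theorem cos_nonneg_or_nonpos_of_mem_quarter (k : ℤ) :
    (∀ u ∈ Set.Icc (k * (π / 2)) ((k + 1) * (π / 2)), 0 ≤ cos u) ∨
      (∀ u ∈ Set.Icc (k * (π / 2)) ((k + 1) * (π / 2)), cos u ≤ 0) := by
  obtain ⟨n, hk⟩ := Int.even_or_odd' k
  have hcos : ∀ u, cos u = (-1) ^ n * cos (u - n * π) := fun u => by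
    rw [cos_sub_int_mul_pi, ← mul_assoc, ← mul_zpow, neg_one_mul, neg_neg, one_zpow, one_mul]
  rcases hk with hk | hk <;> rcases Int.even_or_odd n with hn | hn
  · refine .inl fun u ⟨hu₁, hu₂⟩ => ?_
    rw [hcos, hn.neg_one_zpow, one_mul]
    push_cast [hk] at hu₁ hu₂
    exact cos_nonneg_of_mem_Icc ⟨by linarith, by linarith⟩
  · refine .inr fun u ⟨hu₁, hu₂⟩ => ?_
    rw [hcos, hn.neg_one_zpow, neg_one_mul, neg_nonpos]
    push_cast [hk] at hu₁ hu₂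
    exact cos_nonneg_of_mem_Icc ⟨by linarith, by linarith⟩
  · refine .inr fun u ⟨hu₁, hu₂⟩ => ?_
    rw [hcos, hn.neg_one_zpow, one_mul]
    push_cast [hk] at hu₁ hu₂
    exact cos_nonpos_of_pi_div_two_le_of_le (by linarith) (by linarith)
  · refine .inl fun u ⟨hu₁, hu₂⟩ => ?_
    rw [hcos, hn.neg_one_zpow, neg_one_mul, neg_nonneg]
    push_cast [hk] at hu₁ hu₂
    exact cos_nonpos_of_pi_div_two_le_of_le (by linarith) (by linarith)

section CosinePhase

variable {G G' : ℝ → ℂ} {lam A B : ℝ}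

theorem intervalIntegrable_mul_cexp_cos {x y : ℝ} (hxy : x ≤ y)
    (hG : ∀ u ∈ Set.Icc x y, HasDerivAt G (G' u) u) :
    IntervalIntegrable (fun u => G u * cexp (I * lam * cos u)) volume x y := by
  refine ContinuousOn.intervalIntegrable ?_
  rw [Set.uIcc_of_le hxy]
  have hGc : ContinuousOn G (Set.Icc x y) := fun u hu =>
    (hG u hu).continuousAt.continuousWithinAt
  exact hGc.mul (by fun_prop)

theorem norm_integral_mul_cexp_cos_le_of_mem_quarter (k : ℤ) {x y : ℝ} (hxy : x ≤ y)
    (hQ : Set.Icc x y ⊆ Set.Icc (k * (π / 2)) ((k + 1) * (π / 2))) (hlam : 1 ≤ lam)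
    (hG : ∀ u ∈ Set.Icc x y, HasDerivAt G (G' u) u) (hG' : ContinuousOn G' (Set.Icc x y))
    (hA : ∀ u ∈ Set.Icc x y, ‖G u‖ ≤ A) (hB : ∀ u ∈ Set.Icc x y, ‖G' u‖ ≤ B) :
    ‖∫ u in x..y, G u * cexp (I * lam * cos u)‖
      ≤ (2 * A + π / 2 * (4 * A + B * (π / 2))) * lam ^ (-(1 / 2 : ℝ)) := by
  have hlam0 : 0 < lam := one_pos.trans_le hlam
  set δ := lam ^ (-(1 / 2 : ℝ))
  have hδ : 0 < δ := rpow_pos_of_pos hlam0 _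
  have hlamδ : lam * δ * δ = 1 := by
    rw [mul_assoc, ← rpow_add hlam0]
    norm_num [rpow_neg_one, mul_inv_cancel₀ hlam0.ne']
  have hA0 : 0 ≤ A := (norm_nonneg _).trans (hA x ⟨le_rfl, hxy⟩)
  have hB0 : 0 ≤ B := (norm_nonneg _).trans (hB x ⟨le_rfl, hxy⟩)
  refine (norm_integral_le_of_norm_integral_le_away_from_ends (A := A)
    (M := π / 2 * (4 * A + B * (π / 2)) * δ) hxy hQ hδ.le (by positivity)
    (intervalIntegrable_mul_cexp_cos hxy hG) (fun u hu => ?_) fun x' y' hx'y' hsub => ?_).trans_eq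
    (by ring)
  · rw [norm_mul, norm_cexp_I_mul_ofReal_mul, mul_one]
    exact hA u hu
  obtain ⟨n, hk⟩ := Int.even_or_odd' k
  have hsin : ∀ u ∈ Set.Icc x' y', 2 / π * δ ≤ |-sin u| := fun u hu => by
    obtain ⟨-, hu₁, hu₂⟩ := hsub hu
    rw [abs_neg]
    refine two_div_pi_mul_le_abs_sin (n := n) hδ.le ⟨?_, ?_⟩ <;>
      rcases hk with hk | hk <;> push_cast [hk] at hu₁ hu₂ <;> linarith
  have hsign := (cos_nonneg_or_nonpos_of_mem_quarter k).symm.imp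
    (fun h u hu => neg_nonneg.mpr (h u (hQ (hsub hu).1)))
    (fun h u hu => neg_nonpos.mpr (h u (hQ (hsub hu).1)))
  have hsub' : Set.Icc x' y' ⊆ Set.Icc x y := fun u hu => (hsub hu).1
  have hlen : y' - x' ≤ π / 2 := by
    have h₁ := (hQ (hsub' ⟨le_rfl, hx'y'⟩)).1
    have h₂ := (hQ (hsub' ⟨hx'y', le_rfl⟩)).2
    linarith
  calc ‖∫ u in x'..y', G u * cexp (I * lam * cos u)‖
      ≤ (4 * A + B * (y' - x')) / (lam * (2 / π * δ)) :=
        norm_integral_mul_cexp_phase_le hx'y' hlam0 (by positivity)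
          (fun u _ => hasDerivAt_cos u) (fun u _ => (hasDerivAt_sin u).neg)
          continuous_cos.neg.continuousOn hsign hsin
          (fun u hu => hG u (hsub' hu)) (hG'.mono hsub')
          (fun u hu => hA u (hsub' hu)) (fun u hu => hB u (hsub' hu))
    _ ≤ (4 * A + B * (π / 2)) / (lam * (2 / π * δ)) := by gcongr
    _ = π / 2 * (4 * A + B * (π / 2)) * δ := by
        field_simp
        linear_combination -2 * (4 * A + B * (π / 2)) * hlamδ

theorem norm_integral_mul_cexp_cos_le {c d : ℝ} (hcd : c ≤ d) (hlen : d - c ≤ 2 * π)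
    (hlam : 1 ≤ lam)
    (hG : ∀ u ∈ Set.Icc c d, HasDerivAt G (G' u) u) (hG' : ContinuousOn G' (Set.Icc c d))
    (hA : ∀ u ∈ Set.Icc c d, ‖G u‖ ≤ A) (hB : ∀ u ∈ Set.Icc c d, ‖G' u‖ ≤ B) :
    ‖∫ u in c..d, G u * cexp (I * lam * cos u)‖
      ≤ 5 * (2 * A + π / 2 * (4 * A + B * (π / 2))) * lam ^ (-(1 / 2 : ℝ)) := by
  refine (norm_integral_le_of_norm_integral_le_on_cells (N := 4) (h := π / 2)
    (M := (2 * A + π / 2 * (4 * A + B * (π / 2))) * lam ^ (-(1 / 2 : ℝ))) hcd (by positivity)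
    (by push_cast; linarith) (intervalIntegrable_mul_cexp_cos hcd hG)
    fun k x y hxy hsub => ?_).trans_eq (by push_cast; ring)
  have hsub' : Set.Icc x y ⊆ Set.Icc c d := hsub.trans Set.inter_subset_left
  exact norm_integral_mul_cexp_cos_le_of_mem_quarter k hxy (hsub.trans Set.inter_subset_right)
    hlam (fun u hu => hG u (hsub' hu)) (hG'.mono hsub') (fun u hu => hA u (hsub' hu))
    (fun u hu => hB u (hsub' hu))

end CosinePhase

/-- Uniform `O(λ^{-1/2})` decay of the oscillatory integral with phase `cos(φ - s)`:
if `g` is continuously differentiable on `[a, b]` with `b - a ≤ 2π`, then there is a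
constant `C > 0` (depending only on `g`, `a`, `b`) such that for all `φ ∈ ℝ` and all
`λ ≥ 1`, `|∫_a^b g(s) exp(iλ cos(φ - s)) ds| ≤ C λ^{-1/2}`. -/
theorem oscillatory_integral_cos_phase_decay
    (a b : ℝ) (hab : a < b) (hlen : b - a ≤ 2 * Real.pi)
    (g g' : ℝ → ℂ)
    (hg : ∀ s ∈ Set.Icc a b, HasDerivAt g (g' s) s)
    (hg' : ContinuousOn g' (Set.Icc a b)) :
    ∃ C : ℝ, 0 < C ∧
      ∀ (φ lam : ℝ), 1 ≤ lam →
        ‖∫ s in a..b, g s * Complex.exp (Complex.I * lam * Real.cos (φ - s))‖ ≤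
          C * lam ^ (-(1 / 2 : ℝ)) := by
  obtain ⟨A, hA⟩ := isCompact_Icc.exists_bound_of_continuousOn fun s hs =>
    (hg s hs).continuousAt.continuousWithinAt
  obtain ⟨B, hB⟩ := isCompact_Icc.exists_bound_of_continuousOn hg'
  set K := 5 * (2 * A + π / 2 * (4 * A + B * (π / 2)))
  refine ⟨max K 1, by positivity, fun φ lam hlam => ?_⟩
  have hreflect : ∀ u ∈ Set.Icc (φ - b) (φ - a), φ - u ∈ Set.Icc a b := fun u hu =>
    ⟨by linarith [hu.2], by linarith [hu.1]⟩
  have hsubst : ∫ s in a..b, g s * cexp (I * lam * cos (φ - s))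
      = ∫ u in φ - b..φ - a, g (φ - u) * cexp (I * lam * cos u) := by
    simpa only [sub_sub_cancel] using
      integral_comp_sub_left (fun u => g (φ - u) * cexp (I * lam * cos u)) φ
  rw [hsubst]
  calc _ ≤ K * lam ^ (-(1 / 2 : ℝ)) :=
        norm_integral_mul_cexp_cos_le (G' := fun u => -g' (φ - u)) (by linarith) (by linarith)
          hlam (fun u hu => (hg _ (hreflect u hu)).comp_const_sub φ u)
          ((hg'.comp (by fun_prop) (Set.mapsTo_iff_subset_preimage.mpr hreflect)).neg)
          (fun u hu => hA _ (hreflect u hu))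
          (fun u hu => (norm_neg _).trans_le (hB _ (hreflect u hu)))
    _ ≤ max K 1 * lam ^ (-(1 / 2 : ℝ)) := by gcongr; exact le_max_left _ _
end
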